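/- Let ρ, σ be positive definite n×n complex matrices and α ∈ (0,1) ∪ (1,2]. Set Q := Tr(σ #_α ρ) and ĝ := (σ #_α ρ)/Q. Then α·D^{max}(ĝ‖ρ) + (1−α)·D^{max}(ĝ‖σ) = − log Q. Equivalently, the maximal Rényi α-divergence D_α^{max}(ρ‖σ) := (1/(α−1))·(log Tr(σ #_α ρ) − log Tr ρ) satisfies D_α^{max}(ρ‖σ) = (α/(1−α))·D^{max}(ĝ‖ρ) + D^{max}(ĝ‖σ) − (1/(α−1))·log Tr ρ. -/

import Mathlib

open Matrix
open scoped ComplexOrder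

/-- Functional calculus for Hermitian matrices: apply `f : ℝ → ℝ` to the eigenvalues
in a spectral decomposition (and return `0` on non-Hermitian input). -/
noncomputable def mfun {ι : Type*} [Fintype ι] [DecidableEq ι]
    (f : ℝ → ℝ) (A : Matrix ι ι ℂ) : Matrix ι ι ℂ :=
  letI := Classical.propDecidable A.IsHermitian
  if hA : A.IsHermitian then hA.cfc f else 0

/-- Real matrix power `A ^ γ` via functional calculus (with `Real.rpow` on eigenvalues,
so that `0 ^ γ = 0` for `γ ≠ 0`, giving the generalized inverse for `γ = -1`). -/
noncomputable def mpow {ι : Type*} [Fintype ι] [DecidableEq ι]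
    (A : Matrix ι ι ℂ) (γ : ℝ) : Matrix ι ι ℂ :=
  mfun (fun x => x ^ γ) A

/-- The `γ`-weighted geometric mean
`σ #_γ ρ := σ^{1/2} · (σ^{-1/2} · ρ · σ^{-1/2})^γ · σ^{1/2}`. -/
noncomputable def geomMean {ι : Type*} [Fintype ι] [DecidableEq ι]
    (σ ρ : Matrix ι ι ℂ) (γ : ℝ) : Matrix ι ι ℂ :=
  mpow σ (1 / 2) * mpow (mpow σ (-(1 / 2)) * ρ * mpow σ (-(1 / 2))) γ * mpow σ (1 / 2)

/-- The Belavkin-Staszewski (maximal) relative entropy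
`D^max(ω‖τ) := Tr[ω · log(ω^{1/2} · τ⁻¹ · ω^{1/2})]` of positive definite matrices. -/
noncomputable def Dmax {ι : Type*} [Fintype ι] [DecidableEq ι]
    (ω τ : Matrix ι ι ℂ) : ℝ :=
  ((ω * mfun Real.log (mpow ω (1 / 2) * mpow τ (-1) * mpow ω (1 / 2))).trace).re

section Aux
variable {ι : Type*} [Fintype ι] [DecidableEq ι]

lemma contOn_fin (f : ℝ → ℝ) {s : Set ℝ} (hs : s.Finite) : ContinuousOn f s := by
  have := hs.to_subtype
  rw [continuousOn_iff_continuous_restrict]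
  exact continuous_of_discreteTopology

lemma contOn (f : ℝ → ℝ) (A : Matrix ι ι ℂ) : ContinuousOn f (spectrum ℝ A) :=
  contOn_fin f (Matrix.finite_real_spectrum (A := A))

lemma contOn_im (f : ℝ → ℝ) (g : ℝ → ℝ) (A : Matrix ι ι ℂ) :
    ContinuousOn f (g '' spectrum ℝ A) :=
  contOn_fin f ((Matrix.finite_real_spectrum (A := A)).image g)

lemma mfun_eq {A : Matrix ι ι ℂ} (hA : A.IsHermitian) (f : ℝ → ℝ) :
    mfun f A = cfc f A := by
  simp only [mfun]
  rw [dif_pos hA, hA.cfc_eq]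

omit [Fintype ι] [DecidableEq ι] in
lemma isHermitian_of_sa {A : Matrix ι ι ℂ} (h : IsSelfAdjoint A) : A.IsHermitian := h

lemma spectrum_pos {A : Matrix ι ι ℂ} (hA : A.PosDef) :
    ∀ x ∈ spectrum ℝ A, 0 < x := by
  rw [hA.1.spectrum_real_eq_range_eigenvalues]
  rintro x ⟨i, rfl⟩
  exact hA.eigenvalues_pos i

lemma posdef_conj {A : Matrix ι ι ℂ} (hA : A.PosDef) {B : Matrix ι ι ℂ} (hB : IsUnit B) :
    (B * A * Bᴴ).PosDef := by
  refine Matrix.PosDef.of_dotProduct_mulVec_pos (isHermitian_mul_mul_conjTranspose _ hA.1) fun x hx => ?_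
  have hy : Bᴴ *ᵥ x ≠ 0 := by
    intro h
    exact hx <| Matrix.mulVec_injective_iff_isUnit.mpr ((Matrix.isUnit_conjTranspose B).mpr hB)
      (by simpa using h)
  have h2 := hA.dotProduct_mulVec_pos hy
  convert h2 using 1
  rw [star_mulVec, dotProduct_mulVec, dotProduct_mulVec, vecMul_vecMul,
    conjTranspose_conjTranspose, ← dotProduct_mulVec, ← dotProduct_mulVec,
    Matrix.mulVec_mulVec]

lemma posDef_of_spectrum {A : Matrix ι ι ℂ} (hA : A.IsHermitian)
    (h : ∀ x ∈ spectrum ℝ A, 0 < x) : A.PosDef := by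
  have hd : (Matrix.diagonal (RCLike.ofReal ∘ hA.eigenvalues) : Matrix ι ι ℂ).PosDef := by
    rw [Matrix.posDef_diagonal_iff]
    intro i
    have hi : (0:ℝ) < hA.eigenvalues i := h _ (hA.spectrum_real_eq_range_eigenvalues ▸ ⟨i, rfl⟩)
    simpa using hi
  have hU : IsUnit (hA.eigenvectorUnitary : Matrix ι ι ℂ) :=
    ⟨Unitary.toUnits hA.eigenvectorUnitary, rfl⟩
  have := posdef_conj hd hU
  convert this using 1
  exact hA.spectral_theorem

lemma posDef_cfc {A : Matrix ι ι ℂ} (hA : A.PosDef) {f : ℝ → ℝ}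
    (hf : ∀ x ∈ spectrum ℝ A, 0 < f x) : (cfc f A).PosDef := by
  have hsa : IsSelfAdjoint A := hA.1
  refine posDef_of_spectrum (isHermitian_of_sa (cfc_predicate f A)) ?_
  intro x hx
  rw [cfc_map_spectrum (R := ℝ) f A hsa (contOn f A)] at hx
  obtain ⟨y, hy, rfl⟩ := hx
  exact hf y hy

end Aux

section Aux2
variable {ι : Type*} [Fintype ι] [DecidableEq ι]

lemma mpow_eq {A : Matrix ι ι ℂ} (hA : A.IsHermitian) (γ : ℝ) :
    mpow A γ = cfc (fun x : ℝ => x ^ γ) A := mfun_eq hA _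

lemma mpow_posDef {A : Matrix ι ι ℂ} (hA : A.PosDef) (γ : ℝ) : (mpow A γ).PosDef := by
  rw [mpow_eq hA.1]
  exact posDef_cfc hA fun x hx => Real.rpow_pos_of_pos (spectrum_pos hA x hx) γ

lemma mpow_isHermitian {A : Matrix ι ι ℂ} (hA : A.IsHermitian) (γ : ℝ) :
    (mpow A γ).IsHermitian := by
  rw [mpow_eq hA]
  exact isHermitian_of_sa (cfc_predicate _ A)

lemma mpow_add {A : Matrix ι ι ℂ} (hA : A.PosDef) (γ δ : ℝ) :
    mpow A γ * mpow A δ = mpow A (γ + δ) := by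
  rw [mpow_eq hA.1, mpow_eq hA.1, mpow_eq hA.1,
    ← cfc_mul _ _ A (contOn _ A) (contOn _ A)]
  exact cfc_congr fun x hx => (Real.rpow_add (spectrum_pos hA x hx) γ δ).symm

lemma mpow_one {A : Matrix ι ι ℂ} (hA : A.IsHermitian) : mpow A 1 = A := by
  rw [mpow_eq hA]
  have h : cfc (fun x : ℝ => x ^ (1:ℝ)) A = cfc (id : ℝ → ℝ) A :=
    cfc_congr fun x _ => Real.rpow_one x
  rw [h, cfc_id ℝ A hA.isSelfAdjoint]

lemma mpow_zero {A : Matrix ι ι ℂ} (hA : A.IsHermitian) : mpow A 0 = 1 := by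
  rw [mpow_eq hA]
  have h : cfc (fun x : ℝ => x ^ (0:ℝ)) A = cfc (fun _ : ℝ => (1:ℝ)) A :=
    cfc_congr fun x _ => Real.rpow_zero x
  rw [h, cfc_const_one ℝ A hA.isSelfAdjoint]

lemma mpow_neg_one {A : Matrix ι ι ℂ} (hA : A.PosDef) : mpow A (-1) = A⁻¹ := by
  refine (Matrix.inv_eq_right_inv ?_).symm
  have : A * mpow A (-1) = mpow A 1 * mpow A (-1) := by rw [mpow_one hA.1]
  rw [this, mpow_add hA, add_neg_cancel, mpow_zero hA.1]

lemma mpow_smul {A : Matrix ι ι ℂ} (hA : A.PosDef) {c : ℝ} (hc : 0 < c) (γ : ℝ) :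
    mpow (c • A) γ = (c ^ γ) • mpow A γ := by
  have hcA : (c • A).IsHermitian :=
    isHermitian_of_sa ((IsSelfAdjoint.all c).smul hA.1.isSelfAdjoint)
  rw [mpow_eq hcA, mpow_eq hA.1,
    ← cfc_comp_smul (R := ℝ) c (fun x : ℝ => x ^ γ) A (contOn_im _ _ A) hA.1.isSelfAdjoint]
  have h : cfc (fun x : ℝ => (c • x) ^ γ) A = cfc (fun x : ℝ => c ^ γ * x ^ γ) A := by
    refine cfc_congr fun x hx => ?_
    simp [smul_eq_mul, Real.mul_rpow hc.le (spectrum_pos hA x hx).le]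
  rw [h, cfc_const_mul _ _ A (contOn _ A)]

lemma trace_re_pos [Nonempty ι] {A : Matrix ι ι ℂ} (hA : A.PosDef) : 0 < A.trace.re := by
  have h : ∀ i, 0 < (A i i).re := by
    intro i
    have h1 := hA.dotProduct_mulVec_pos (x := Pi.single i 1) (fun h => (one_ne_zero : (1:ℂ) ≠ 0) (by simpa using congrFun h i))
    have h2 : star (Pi.single i 1 : ι → ℂ) ⬝ᵥ A *ᵥ Pi.single i 1 = A i i := by
      simp [dotProduct, Matrix.mulVec, Pi.single_apply, Finset.sum_ite_eq,
        star_apply]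
    rw [h2] at h1
    exact (Complex.lt_def.mp h1).1
  have ht : A.trace.re = ∑ i, (A i i).re := by
    simp [Matrix.trace, Matrix.diag, Complex.re_sum]
  rw [ht]
  exact Finset.sum_pos (fun i _ => h i) Finset.univ_nonempty

/-- conjugation by a unitary commutes with cfc -/
lemma cfc_conj {U A : Matrix ι ι ℂ} (h1 : U * Uᴴ = 1) (h2 : Uᴴ * U = 1)
    (f : ℝ → ℝ) (hA : IsSelfAdjoint A) :
    cfc f (U * A * Uᴴ) = U * cfc f A * Uᴴ := by
  let φ : Matrix ι ι ℂ →⋆ₐ[ℂ] Matrix ι ι ℂ :=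
  { toFun := fun x => U * x * Uᴴ
    map_one' := by simpa using h1
    map_mul' := fun x y => by
      show U * (x * y) * Uᴴ = U * x * Uᴴ * (U * y * Uᴴ)
      rw [show U * x * Uᴴ * (U * y * Uᴴ) = U * x * (Uᴴ * U) * (y * Uᴴ) from by
        simp only [Matrix.mul_assoc], h2, Matrix.mul_one]
      simp only [Matrix.mul_assoc]
    map_zero' := by simp
    map_add' := fun x y => by
      simp [Matrix.mul_add, Matrix.add_mul]
    commutes' := fun r => by
      simp only [Algebra.algebraMap_eq_smul_one]
      rw [Matrix.mul_smul, Matrix.mul_one, Matrix.smul_mul, h1]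
    map_star' := fun x => by
      simp only [Matrix.star_eq_conjTranspose, Matrix.conjTranspose_mul,
        Matrix.conjTranspose_conjTranspose, Matrix.mul_assoc] }
  have hφ : Continuous φ := by
    show Continuous fun x : Matrix ι ι ℂ => U * x * Uᴴ
    exact (continuous_const.matrix_mul continuous_id).matrix_mul continuous_const
  have hφa : IsSelfAdjoint (φ A) := by
    have := hA.conjugate U
    simpa [φ, Matrix.star_eq_conjTranspose] using this
  have h := StarAlgHomClass.map_cfc (R := ℝ) (S := ℂ) φ f A (contOn f A) hφ hA hφa
  have hφcfc : φ (cfc f A) = U * cfc f A * Uᴴ := rfl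
  have hφA : φ A = U * A * Uᴴ := rfl
  rw [hφcfc, hφA] at h
  exact h.symm

lemma log_mpow {A : Matrix ι ι ℂ} (hA : A.PosDef) (γ : ℝ) :
    cfc Real.log (mpow A γ) = γ • cfc Real.log A := by
  rw [mpow_eq hA.1,
    ← cfc_comp Real.log (fun x : ℝ => x ^ γ) A hA.1.isSelfAdjoint (contOn_im _ _ A) (contOn _ A)]
  have h : cfc (Real.log ∘ fun x : ℝ => x ^ γ) A = cfc (fun x => γ * Real.log x) A :=
    cfc_congr fun x hx => by
      simp [Function.comp, Real.log_rpow (spectrum_pos hA x hx)]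
  rw [h, cfc_const_mul _ _ A (contOn _ A)]

lemma log_smul_mat {A : Matrix ι ι ℂ} (hA : A.PosDef) {c : ℝ} (hc : 0 < c) :
    cfc Real.log (c • A) = Real.log c • (1 : Matrix ι ι ℂ) + cfc Real.log A := by
  rw [← cfc_comp_smul (R := ℝ) c Real.log A (contOn_im _ _ A) hA.1.isSelfAdjoint]
  have h : cfc (fun x : ℝ => Real.log (c • x)) A
      = cfc (fun x : ℝ => Real.log c + Real.log x) A :=
    cfc_congr fun x hx => by
      simp [smul_eq_mul, Real.log_mul hc.ne' (spectrum_pos hA x hx).ne']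
  rw [h, cfc_add A _ _ (contOn _ A) (contOn _ A), cfc_const _ A hA.1.isSelfAdjoint,
    Algebra.algebraMap_eq_smul_one]

end Aux2

section Aux3
variable {ι : Type*} [Fintype ι] [DecidableEq ι]

lemma Dmax_smul [Nonempty ι] {G τ : Matrix ι ι ℂ} (hG : G.PosDef) (hτ : τ.PosDef) :
    Dmax ((G.trace.re)⁻¹ • G) τ
      = -Real.log (G.trace.re)
        + (G.trace.re)⁻¹ *
          ((G * cfc Real.log (mpow G (1/2) * mpow τ (-1) * mpow G (1/2))).trace.re) := by
  have hQ : 0 < G.trace.re := trace_re_pos hG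
  set Q := G.trace.re with hQdef
  have hQi : 0 < Q⁻¹ := inv_pos.mpr hQ
  have hg2 : (mpow G (1/2)).PosDef := mpow_posDef hG _
  have hτi : (mpow τ (-1)).PosDef := mpow_posDef hτ _
  have hK' : (mpow G (1/2) * mpow τ (-1) * mpow G (1/2)).PosDef := by
    have h := posdef_conj hτi hg2.isUnit
    rwa [hg2.1.eq] at h
  have hKeq : mpow (Q⁻¹ • G) (1/2) * mpow τ (-1) * mpow (Q⁻¹ • G) (1/2)
      = Q⁻¹ • (mpow G (1/2) * mpow τ (-1) * mpow G (1/2)) := by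
    rw [mpow_smul hG hQi]
    rw [smul_mul_assoc, smul_mul_assoc, mul_smul_comm, smul_smul]
    congr 1
    rw [← Real.rpow_add hQi]
    norm_num
  have hherm : ((Q⁻¹ : ℝ) • (mpow G (1/2) * mpow τ (-1) * mpow G (1/2))).IsHermitian :=
    isHermitian_of_sa ((IsSelfAdjoint.all (Q⁻¹ : ℝ)).smul hK'.1.isSelfAdjoint)
  rw [Dmax, hKeq, mfun_eq hherm, log_smul_mat hK' hQi, Real.log_inv]
  set L := cfc Real.log (mpow G (1/2) * mpow τ (-1) * mpow G (1/2)) with hL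
  rw [smul_mul_assoc, Matrix.mul_add, mul_smul_comm, Matrix.mul_one, Matrix.trace_smul,
    Matrix.trace_add, Matrix.trace_smul]
  have hre : ((Q⁻¹ : ℝ) • ((-Real.log Q : ℝ) • G.trace + (G * L).trace)).re
      = Q⁻¹ * (-Real.log Q * Q + (G * L).trace.re) := by
    simp only [Complex.smul_re, Complex.add_re, smul_eq_mul, ← hQdef]
  rw [hre]
  have h1 : Q⁻¹ * Q = 1 := inv_mul_cancel₀ hQ.ne'
  have h2 : Q⁻¹ * (-Real.log Q * Q + (G * L).trace.re)
      = (-Real.log Q) * (Q⁻¹ * Q) + Q⁻¹ * (G * L).trace.re := by ring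
  rw [h2, h1]
  ring

end Aux3


section Key
variable {ι : Type*} [Fintype ι] [DecidableEq ι]

lemma M_posDef {ρ σ : Matrix ι ι ℂ} (hρ : ρ.PosDef) (hσ : σ.PosDef) :
    (mpow σ (-(1/2)) * ρ * mpow σ (-(1/2))).PosDef := by
  have hsi := mpow_posDef hσ (-(1/2))
  have h := posdef_conj hρ hsi.isUnit
  rwa [hsi.1.eq] at h

lemma geomMean_posDef {ρ σ : Matrix ι ι ℂ} (hρ : ρ.PosDef) (hσ : σ.PosDef) (γ : ℝ) :
    (geomMean σ ρ γ).PosDef := by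
  have hs := mpow_posDef hσ (1/2)
  have hP := mpow_posDef (M_posDef hρ hσ) γ
  have h := posdef_conj hP hs.isUnit
  have hGeq : geomMean σ ρ γ = mpow σ (1/2) * mpow (mpow σ (-(1/2)) * ρ * mpow σ (-(1/2))) γ * mpow σ (1/2) := rfl
  rw [hGeq]
  rwa [hs.1.eq] at h

lemma key_traces {ρ σ : Matrix ι ι ℂ} (hρ : ρ.PosDef) (hσ : σ.PosDef) (α : ℝ) :
    ∃ T : ℝ,
      ((geomMean σ ρ α * cfc Real.log
          (mpow (geomMean σ ρ α) (1/2) * mpow ρ (-1) * mpow (geomMean σ ρ α) (1/2))).trace).re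
        = (α - 1) * T
      ∧ ((geomMean σ ρ α * cfc Real.log
          (mpow (geomMean σ ρ α) (1/2) * mpow σ (-1) * mpow (geomMean σ ρ α) (1/2))).trace).re
        = α * T := by
  -- σ-power cancellation rules
  have e0 : (1/2:ℝ) + -(1/2) = 0 := by norm_num
  have e0' : (-(1/2):ℝ) + 1/2 = 0 := by norm_num
  have u1 : mpow σ (1/2) * mpow σ (-(1/2)) = 1 := by rw [mpow_add hσ, e0, mpow_zero hσ.1]
  have u2 : mpow σ (-(1/2)) * mpow σ (1/2) = 1 := by rw [mpow_add hσ, e0', mpow_zero hσ.1]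
  have u1' : ∀ X : Matrix ι ι ℂ, mpow σ (1/2) * (mpow σ (-(1/2)) * X) = X := fun X => by
    rw [← Matrix.mul_assoc, u1, Matrix.one_mul]
  have u2' : ∀ X : Matrix ι ι ℂ, mpow σ (-(1/2)) * (mpow σ (1/2) * X) = X := fun X => by
    rw [← Matrix.mul_assoc, u2, Matrix.one_mul]
  have hσinv : mpow σ (-1) = mpow σ (-(1/2)) * mpow σ (-(1/2)) := by
    rw [mpow_add hσ]; norm_num
  have hGeq : geomMean σ ρ α = mpow σ (1/2) * mpow (mpow σ (-(1/2)) * ρ * mpow σ (-(1/2))) α * mpow σ (1/2) := rfl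
  rw [hGeq]
  have hM : (mpow σ (-(1/2)) * ρ * mpow σ (-(1/2))).PosDef := M_posDef hρ hσ
  set M : Matrix ι ι ℂ := mpow σ (-(1/2)) * ρ * mpow σ (-(1/2)) with hMdef
  have hρeq : mpow σ (1/2) * M * mpow σ (1/2) = ρ := by
    rw [hMdef]
    simp only [Matrix.mul_assoc]
    rw [u1', u2, Matrix.mul_one]
  have hG : (mpow σ (1/2) * mpow M α * mpow σ (1/2)).PosDef := by
    have hs := mpow_posDef hσ (1/2)
    have h := posdef_conj (mpow_posDef hM α) hs.isUnit
    rwa [hs.1.eq] at h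
  set G : Matrix ι ι ℂ := mpow σ (1/2) * mpow M α * mpow σ (1/2) with hGdef
  -- power rules for M and G
  have cM : ∀ (a b : ℝ) (X : Matrix ι ι ℂ),
      mpow M a * (mpow M b * X) = mpow M (a+b) * X := fun a b X => by
    rw [← Matrix.mul_assoc, mpow_add hM]
  have cMf : ∀ (a b : ℝ), mpow M a * mpow M b = mpow M (a+b) := mpow_add hM
  have cGf : ∀ (a b : ℝ), mpow G a * mpow G b = mpow G (a+b) := mpow_add hG
  have mL : ∀ b : ℝ, M * mpow M b = mpow M (1+b) := fun b => by
    have h := mpow_add hM 1 b; rwa [mpow_one hM.1] at h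
  have mL' : ∀ (b : ℝ) (X : Matrix ι ι ℂ), M * (mpow M b * X) = mpow M (1+b) * X :=
    fun b X => by rw [← Matrix.mul_assoc, mL]
  have gR' : ∀ (a : ℝ) (X : Matrix ι ι ℂ), mpow G a * (G * X) = mpow G (a+1) * X :=
    fun a X => by
      have h := mpow_add hG a 1; rw [mpow_one hG.1] at h
      rw [← Matrix.mul_assoc, h]
  have gR : ∀ a : ℝ, mpow G a * G = mpow G (a+1) := fun a => by
    have h := mpow_add hG a 1; rwa [mpow_one hG.1] at h
  -- expansions
  have hGexp : ∀ X : Matrix ι ι ℂ, G * X = mpow σ (1/2) * (mpow M α * (mpow σ (1/2) * X)) := fun X => by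
    rw [hGdef]; simp only [Matrix.mul_assoc]
  have hg2L : mpow G (1/2) = mpow G (-(1/2)) * G := by
    have h := mpow_add hG (-(1/2)) 1
    rw [mpow_one hG.1] at h
    rw [h]; norm_num
  have hg2R : mpow G (1/2) = G * mpow G (-(1/2)) := by
    have h := mpow_add hG 1 (-(1/2))
    rw [mpow_one hG.1] at h
    rw [h]; norm_num
  have hGinv : mpow G (-1) = mpow σ (-(1/2)) * (mpow M (-α) * mpow σ (-(1/2))) := by
    rw [mpow_neg_one hG]
    refine Matrix.inv_eq_right_inv ?_
    rw [hGdef]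
    simp only [Matrix.mul_assoc]
    rw [u1', cM]
    rw [show α + -α = (0:ℝ) from by ring, mpow_zero hM.1, Matrix.one_mul, u1]
  have hρinv : mpow ρ (-1) = mpow σ (-(1/2)) * (mpow M (-1) * mpow σ (-(1/2))) := by
    rw [mpow_neg_one hρ]
    refine Matrix.inv_eq_right_inv ?_
    rw [← hρeq]
    simp only [Matrix.mul_assoc]
    rw [u1', mL']
    rw [show (1:ℝ) + -1 = (0:ℝ) from by ring, mpow_zero hM.1, Matrix.one_mul, u1]
  -- the unitary W
  have hWH : (mpow G (-(1/2)) * (mpow σ (1/2) * mpow M (α/2)))ᴴ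
      = mpow M (α/2) * (mpow σ (1/2) * mpow G (-(1/2))) := by
    simp only [Matrix.conjTranspose_mul, (mpow_isHermitian hG.1 (-(1/2))).eq,
      (mpow_isHermitian hσ.1 (1/2)).eq, (mpow_isHermitian hM.1 (α/2)).eq, Matrix.mul_assoc]
  have hWu1 : (mpow G (-(1/2)) * (mpow σ (1/2) * mpow M (α/2)))
      * (mpow G (-(1/2)) * (mpow σ (1/2) * mpow M (α/2)))ᴴ = 1 := by
    rw [hWH]
    simp only [Matrix.mul_assoc]
    rw [cM, show α/2 + α/2 = α from by ring]
    rw [show mpow σ (1/2) * (mpow M α * (mpow σ (1/2) * mpow G (-(1/2)))) = G * mpow G (-(1/2)) from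
      (hGexp (mpow G (-(1/2)))).symm]
    rw [gR', cGf]
    rw [show -(1/2) + 1 + -(1/2) = (0:ℝ) from by norm_num, mpow_zero hG.1]
  have hWu2 : (mpow G (-(1/2)) * (mpow σ (1/2) * mpow M (α/2)))ᴴ
      * (mpow G (-(1/2)) * (mpow σ (1/2) * mpow M (α/2))) = 1 := by
    rw [hWH]
    simp only [Matrix.mul_assoc]
    rw [show mpow G (-(1/2)) * (mpow G (-(1/2)) * (mpow σ (1/2) * mpow M (α/2)))
        = mpow G (-(1/2) + -(1/2)) * (mpow σ (1/2) * mpow M (α/2)) from by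
      rw [← Matrix.mul_assoc, cGf]]
    rw [show (-(1/2):ℝ) + -(1/2) = -1 from by norm_num, hGinv]
    simp only [Matrix.mul_assoc]
    rw [u2', u1', cM, cMf]
    rw [show α/2 + -α + (α/2) = (0:ℝ) from by ring, mpow_zero hM.1]
  -- conjugation identities
  have hKρ : mpow G (1/2) * mpow ρ (-1) * mpow G (1/2)
      = (mpow G (-(1/2)) * (mpow σ (1/2) * mpow M (α/2))) * mpow M (α - 1)
        * (mpow G (-(1/2)) * (mpow σ (1/2) * mpow M (α/2)))ᴴ := by
    rw [hWH, hρinv]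
    nth_rewrite 1 [hg2L]
    nth_rewrite 1 [hg2R]
    simp only [Matrix.mul_assoc]
    rw [hGexp, hGexp]
    rw [u1', u2', cM, cM, cM, cM]
    ring_nf
  have hKσ : mpow G (1/2) * mpow σ (-1) * mpow G (1/2)
      = (mpow G (-(1/2)) * (mpow σ (1/2) * mpow M (α/2))) * mpow M α
        * (mpow G (-(1/2)) * (mpow σ (1/2) * mpow M (α/2)))ᴴ := by
    rw [hWH, hσinv]
    nth_rewrite 1 [hg2L]
    nth_rewrite 1 [hg2R]
    simp only [Matrix.mul_assoc]
    rw [hGexp, hGexp]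
    rw [u1', u2', cM, cM, cM]
    ring_nf
  -- logs
  have hLρ : cfc Real.log (mpow G (1/2) * mpow ρ (-1) * mpow G (1/2))
      = (mpow G (-(1/2)) * (mpow σ (1/2) * mpow M (α/2))) * ((α - 1) • cfc Real.log M)
        * (mpow G (-(1/2)) * (mpow σ (1/2) * mpow M (α/2)))ᴴ := by
    rw [hKρ, cfc_conj hWu1 hWu2 Real.log (mpow_posDef hM (α-1)).1.isSelfAdjoint,
      log_mpow hM]
  have hLσ : cfc Real.log (mpow G (1/2) * mpow σ (-1) * mpow G (1/2))
      = (mpow G (-(1/2)) * (mpow σ (1/2) * mpow M (α/2))) * (α • cfc Real.log M)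
        * (mpow G (-(1/2)) * (mpow σ (1/2) * mpow M (α/2)))ᴴ := by
    rw [hKσ, cfc_conj hWu1 hWu2 Real.log (mpow_posDef hM α).1.isSelfAdjoint,
      log_mpow hM]
  -- cyclic trace
  have hcyc : ∀ X : Matrix ι ι ℂ,
      (G * ((mpow G (-(1/2)) * (mpow σ (1/2) * mpow M (α/2))) * X
        * (mpow G (-(1/2)) * (mpow σ (1/2) * mpow M (α/2)))ᴴ)).trace
      = (((mpow G (-(1/2)) * (mpow σ (1/2) * mpow M (α/2)))ᴴ * G
          * (mpow G (-(1/2)) * (mpow σ (1/2) * mpow M (α/2)))) * X).trace := by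
    intro X
    calc (G * ((mpow G (-(1/2)) * (mpow σ (1/2) * mpow M (α/2))) * X
            * (mpow G (-(1/2)) * (mpow σ (1/2) * mpow M (α/2)))ᴴ)).trace
        = ((G * ((mpow G (-(1/2)) * (mpow σ (1/2) * mpow M (α/2))) * X))
            * (mpow G (-(1/2)) * (mpow σ (1/2) * mpow M (α/2)))ᴴ).trace := by
          simp only [Matrix.mul_assoc]
      _ = ((mpow G (-(1/2)) * (mpow σ (1/2) * mpow M (α/2)))ᴴ
            * (G * ((mpow G (-(1/2)) * (mpow σ (1/2) * mpow M (α/2))) * X))).trace :=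
          Matrix.trace_mul_comm _ _
      _ = (((mpow G (-(1/2)) * (mpow σ (1/2) * mpow M (α/2)))ᴴ * G
            * (mpow G (-(1/2)) * (mpow σ (1/2) * mpow M (α/2)))) * X).trace := by
          simp only [Matrix.mul_assoc]
  refine ⟨(((mpow G (-(1/2)) * (mpow σ (1/2) * mpow M (α/2)))ᴴ * G
      * (mpow G (-(1/2)) * (mpow σ (1/2) * mpow M (α/2)))) * cfc Real.log M).trace.re, ?_, ?_⟩
  · rw [hLρ, hcyc, mul_smul_comm, Matrix.trace_smul, Complex.smul_re, smul_eq_mul]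
  · rw [hLσ, hcyc, mul_smul_comm, Matrix.trace_smul, Complex.smul_re, smul_eq_mul]

end Key

/-- **The maximal Rényi divergence as a barycentric quantity evaluated at the normalized
geometric mean.** Let `ρ, σ` be positive definite and `α ∈ (0,1) ∪ (1,2]`. With
`Q := Tr(σ #_α ρ)` and `ĝ := (σ #_α ρ)/Q`:
`α·D^max(ĝ‖ρ) + (1−α)·D^max(ĝ‖σ) = − log Q`, and equivalently the maximal Rényi
`α`-divergence `D_α^max(ρ‖σ) := (1/(α−1))·(log Tr(σ #_α ρ) − log Tr ρ)` satisfies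
`D_α^max(ρ‖σ) = (α/(1−α))·D^max(ĝ‖ρ) + D^max(ĝ‖σ) − (1/(α−1))·log Tr ρ`. -/
theorem maxRenyi_eq_barycentric_at_geomMean {n : ℕ}
    (ρ σ : Matrix (Fin n) (Fin n) ℂ) (hρ : ρ.PosDef) (hσ : σ.PosDef)
    (α : ℝ) (hα : α ∈ Set.Ioo (0 : ℝ) 1 ∨ α ∈ Set.Ioc (1 : ℝ) 2) :
    (α * Dmax ((((geomMean σ ρ α).trace).re)⁻¹ • geomMean σ ρ α) ρ
        + (1 - α) * Dmax ((((geomMean σ ρ α).trace).re)⁻¹ • geomMean σ ρ α) σ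
      = - Real.log (((geomMean σ ρ α).trace).re))
    ∧ ((1 / (α - 1)) * (Real.log (((geomMean σ ρ α).trace).re) - Real.log ((ρ.trace).re))
      = (α / (1 - α)) * Dmax ((((geomMean σ ρ α).trace).re)⁻¹ • geomMean σ ρ α) ρ
          + Dmax ((((geomMean σ ρ α).trace).re)⁻¹ • geomMean σ ρ α) σ
          - (1 / (α - 1)) * Real.log ((ρ.trace).re)) := by
  have hα1 : α ≠ 1 := by
    rcases hα with h | h
    · exact ne_of_lt h.2
    · exact ne_of_gt h.1
  rcases Nat.eq_zero_or_pos n with hn | hn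
  · subst hn
    have h0 : ∀ A : Matrix (Fin 0) (Fin 0) ℂ, A.trace = 0 := fun A => by
      simp [Matrix.trace]
    constructor
    · simp [Dmax, h0, Real.log_zero]
    · simp [Dmax, h0, Real.log_zero]
  · haveI : Nonempty (Fin n) := Fin.pos_iff_nonempty.mp hn
    obtain ⟨T, hTρ, hTσ⟩ := key_traces hρ hσ α
    have hG := geomMean_posDef hρ hσ α
    have hQ : 0 < ((geomMean σ ρ α).trace).re := trace_re_pos hG
    have hDρ := Dmax_smul hG hρ
    have hDσ := Dmax_smul hG hσ
    rw [hTρ] at hDρ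
    rw [hTσ] at hDσ
    set Q := ((geomMean σ ρ α).trace).re with hQdef
    have hQ0 : Q ≠ 0 := hQ.ne'
    constructor
    · rw [hDρ, hDσ]
      field_simp
      ring
    · rw [hDρ, hDσ]
      have h1 : α - 1 ≠ 0 := sub_ne_zero.mpr hα1
      have h2 : (1:ℝ) - α ≠ 0 := sub_ne_zero.mpr (Ne.symm hα1)
      field_simp
      ring
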